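/- arXiv:math/0302324 — 3 statements merged into one kernel-verified Lean document; each statement's English description precedes it below -/
import Mathlib

section
/- Let p ≥ 5 be a prime. The equations n² - nm + m² + m + 1 = 0, k² - kl + l² + l + 1 = 0, and k(m-2n) + l(n-2m-1) - m = 0 have a common solution (n,m,k,l) in (ℤ/p)⁴. In fact one may choose n, m satisfying the first equation with m ≠ 2n, and then l = -(m+2±(m-2n))/2 and k determined by the third equation solve the system. -/
/-!
With `x = 3m + 2` and `y = 2n - m` the first equation becomes `x² + 3y² + 8 = 0` (after scaling
by `12`), a conic that has points over every finite field of odd characteristic by the usual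
pigeonhole argument for sums of two quadratics, and `y ≠ 0` is exactly `m ≠ 2n`. Taking
`l = n - m - 1` and solving the third (linear) equation for `k`, the second equation follows
from the first: multiplied by `(m - 2n)²` it is a multiple of it.
-/

open Polynomial

lemma ZMod.natCast_ne_zero_of_pos_of_lt {p a : ℕ} (ha : 0 < a) (hap : a < p) :
    (a : ZMod p) ≠ 0 := by
  rw [Ne, ZMod.natCast_eq_zero_iff]
  exact fun h => absurd (Nat.le_of_dvd ha h) (by omega)

section FiniteField

variable {F : Type*} [Field F] [Fintype F]

lemma exists_sq_add_three_mul_sq_add_eight_eq_zero (hF : ringChar F ≠ 2) (h3 : (3 : F) ≠ 0) :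
    ∃ x y : F, x ^ 2 + 3 * y ^ 2 + 8 = 0 ∧ y ≠ 0 := by
  have h8 : (8 : F) ≠ 0 := by
    simpa [show (8 : F) = 2 ^ 3 by norm_num] using Ring.two_ne_zero hF
  obtain ⟨a, b, hab⟩ := FiniteField.exists_root_sum_quadratic
    (f := (X : F[X]) ^ 2 + C 8) (g := C 3 * X ^ 2)
    (degree_X_pow_add_C (by norm_num) 8) (degree_C_mul_X_pow 2 h3)
    (FiniteField.odd_card_of_char_ne_two hF)
  simp only [eval_add, eval_pow, eval_X, eval_C, eval_mul] at hab
  by_cases hb : b = 0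
  · -- then `a² = -8`, and `(-4, a)` is a point off the line `y = 0`
    subst hb
    refine ⟨-4, a, by linear_combination 3 * hab, fun ha => h8 ?_⟩
    subst ha
    linear_combination hab
  · exact ⟨a, b, by linear_combination hab, hb⟩

lemma exists_sq_sub_mul_add_sq_add_add_one_eq_zero (hF : ringChar F ≠ 2) (h3 : (3 : F) ≠ 0) :
    ∃ n m : F, n ^ 2 - n * m + m ^ 2 + m + 1 = 0 ∧ m ≠ 2 * n := by
  have h2 : (2 : F) ≠ 0 := Ring.two_ne_zero hF
  obtain ⟨x, y, hxy, hy⟩ := exists_sq_add_three_mul_sq_add_eight_eq_zero hF h3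
  obtain ⟨m, hm⟩ : ∃ m : F, 3 * m = x - 2 := ⟨(x - 2) / 3, mul_div_cancel₀ _ h3⟩
  obtain ⟨n, hn⟩ : ∃ n : F, 2 * n = m + y := ⟨(m + y) / 2, mul_div_cancel₀ _ h2⟩
  have h12 : (12 : F) ≠ 0 := by
    simpa [show (12 : F) = 2 * 2 * 3 by norm_num] using ⟨h2, h3⟩
  refine ⟨n, m, (mul_eq_zero.mp ?_).resolve_left h12, fun h => hy ?_⟩
  · linear_combination hxy + (x + 3 * m + 2) * hm + 3 * (y + 2 * n - m) * hn
  · linear_combination -hn - h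

end FiniteField

lemma sq_sub_mul_add_sq_add_add_one_eq_zero_of_linear {F : Type*} [Field F] {n m k : F}
    (h : n ^ 2 - n * m + m ^ 2 + m + 1 = 0) (hmn : m ≠ 2 * n)
    (hk : k * (m - 2 * n) + (n - m - 1) * (n - 2 * m - 1) - m = 0) :
    k ^ 2 - k * (n - m - 1) + (n - m - 1) ^ 2 + (n - m - 1) + 1 = 0 := by
  have hd : (m - 2 * n) ^ 2 ≠ 0 := pow_ne_zero 2 (sub_ne_zero.mpr hmn)
  refine (mul_eq_zero.mp ?_).resolve_left hd
  linear_combination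
    (k * (m - 2 * n) + (m - (n - m - 1) * (n - 2 * m - 1)) - (n - m - 1) * (m - 2 * n)) * hk
      + (3 * n ^ 2 - 6 * n * m - 2 * n + 2 * m + 3 * m ^ 2 + 1) * h

/-- For a prime `p ≥ 5`, the compatibility system for realizing the Dynkin
diagram `D₄` over `(ℤ/p)²` has a solution `(n,m,k,l)` in `(ℤ/p)⁴`; moreover one
may choose `n, m` with `m ≠ 2n` and `l = -(m+2±(m-2n))/2`. -/
theorem stmt_6 (p : ℕ) [Fact p.Prime] (hp : 5 ≤ p) :
    ∃ n m k l : ZMod p,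
      n ^ 2 - n * m + m ^ 2 + m + 1 = 0 ∧
      k ^ 2 - k * l + l ^ 2 + l + 1 = 0 ∧
      k * (m - 2 * n) + l * (n - 2 * m - 1) - m = 0 ∧
      m ≠ 2 * n ∧
      (l = -(m + 2 + (m - 2 * n)) / 2 ∨ l = -(m + 2 - (m - 2 * n)) / 2) := by
  have hchar : ringChar (ZMod p) ≠ 2 := by rw [ZMod.ringChar_zmod_n]; omega
  have h3 : (3 : ZMod p) ≠ 0 := by
    exact_mod_cast ZMod.natCast_ne_zero_of_pos_of_lt (p := p) (a := 3) (by norm_num) (by omega)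
  obtain ⟨n, m, h, hmn⟩ := exists_sq_sub_mul_add_sq_add_add_one_eq_zero hchar h3
  set k := (m - (n - m - 1) * (n - 2 * m - 1)) / (m - 2 * n)
  have hk : k * (m - 2 * n) + (n - m - 1) * (n - 2 * m - 1) - m = 0 := by
    rw [div_mul_cancel₀ _ (sub_ne_zero.mpr hmn)]; ring
  refine ⟨n, m, k, n - m - 1, h, sq_sub_mul_add_sq_add_add_one_eq_zero_of_linear h hmn hk, hk,
    hmn, Or.inl ?_⟩
  rw [eq_div_iff (Ring.two_ne_zero hchar)]
  ring
end

section
/- Let p ≥ 5 be a prime. The system of equations -n² + nm - m² - m = 1, -k² + kl - l² = 1, and k(m-2n) + l(n-2m-1) = -1 in ℤ/p (the compatibility system for realizing the Dynkin diagram A₄ over (ℤ/p)²) has a solution if and only if 5 is a square modulo p. -/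
/-!
Put `Q(x, y) = x² - xy + y²` with polar form `B`. Substituting `(x, y) = (3n + 1, 3m + 2)`, the
system says that the vectors `(x, y)` and `(k, l)` have Gram data `Q(x, y) = -6`, `Q(k, l) = -1`,
`B = 3`. Lagrange's identity `4 Q(w) Q(w') - B(w, w')² = 3 det(w, w')²` then forces
`det² = (24 - 9) / 3 = 5`. Conversely, `Q` represents `-6` over a finite field, and the vector
`(k, l)` is then cut out by the two linear conditions `B = 3`, `det = √5`, after which
Lagrange's identity gives `Q(k, l) = -1`.
-/

open Polynomial

section EisensteinForm

variable {R : Type*} [CommRing R]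

def eisensteinNorm (x y : R) : R := x ^ 2 - x * y + y ^ 2

/-- The polar form of `eisensteinNorm`, `Q(w + w') - Q(w) - Q(w')`. -/
def eisensteinPolar (x y u v : R) : R := (2 * x - y) * u + (2 * y - x) * v

theorem four_mul_eisensteinNorm_mul_sub_polar_sq (x y u v : R) :
    4 * eisensteinNorm x y * eisensteinNorm u v - eisensteinPolar x y u v ^ 2 =
      3 * (x * v - y * u) ^ 2 := by
  unfold eisensteinNorm eisensteinPolar
  ring

end EisensteinForm

section Field

variable {F : Type*} [Field F]

theorem isSquare_of_eisenstein_gram (h3 : (3 : F) ≠ 0) {a b c x y u v : F}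
    (hxy : eisensteinNorm x y = a) (huv : eisensteinNorm u v = c)
    (hB : eisensteinPolar x y u v = b) : IsSquare ((4 * a * c - b ^ 2) / 3) := by
  refine ⟨x * v - y * u, ?_⟩
  rw [div_eq_iff h3, ← hxy, ← huv, ← hB, four_mul_eisensteinNorm_mul_sub_polar_sq]
  ring

theorem exists_eisensteinPolar_eq_and_det_eq (h2 : (2 : F) ≠ 0) {x y : F}
    (hxy : eisensteinNorm x y ≠ 0) (b d : F) :
    ∃ u v, eisensteinPolar x y u v = b ∧ x * v - y * u = d := by
  -- Cramer's rule: the linear system in `(u, v)` has determinant `2 Q(x, y)`.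
  refine ⟨(b * x - (2 * y - x) * d) / (2 * eisensteinNorm x y),
    ((2 * x - y) * d + b * y) / (2 * eisensteinNorm x y), ?_, ?_⟩
  · unfold eisensteinPolar
    field_simp
    unfold eisensteinNorm
    ring
  · field_simp
    unfold eisensteinNorm
    ring

theorem exists_sq_add_mul_sq_eq [Fintype F] (hF : ringChar F ≠ 2) {a : F} (ha : a ≠ 0) (c : F) :
    ∃ x y : F, x ^ 2 + a * y ^ 2 = c := by
  obtain ⟨x, y, hxy⟩ := FiniteField.exists_root_sum_quadratic (f := X ^ 2 - C c)
    (g := C a * X ^ 2) (degree_X_pow_sub_C (by norm_num) c) (degree_C_mul_X_pow 2 ha)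
    (FiniteField.odd_card_of_char_ne_two hF)
  refine ⟨x, y, ?_⟩
  simp only [eval_sub, eval_mul, eval_pow, eval_X, eval_C] at hxy
  linear_combination hxy

theorem exists_eisensteinNorm_eq [Fintype F] (hF : ringChar F ≠ 2) (h3 : (3 : F) ≠ 0) (c : F) :
    ∃ x y : F, eisensteinNorm x y = c := by
  have h2 : (2 : F) ≠ 0 := Ring.two_ne_zero hF
  -- `4 Q(x, y) = (2x - y)² + 3y²`
  obtain ⟨s, t, hst⟩ := exists_sq_add_mul_sq_eq hF h3 (4 * c)
  refine ⟨(s + t) / 2, t, ?_⟩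
  unfold eisensteinNorm
  field_simp
  linear_combination hst

theorem exists_eisenstein_gram [Fintype F] (hF : ringChar F ≠ 2) (h3 : (3 : F) ≠ 0)
    {a b c : F} (ha : a ≠ 0) (hdet : IsSquare ((4 * a * c - b ^ 2) / 3)) :
    ∃ x y u v, eisensteinNorm x y = a ∧ eisensteinNorm u v = c ∧ eisensteinPolar x y u v = b := by
  have h2 : (2 : F) ≠ 0 := Ring.two_ne_zero hF
  obtain ⟨d, hd⟩ := hdet
  obtain ⟨x, y, hxy⟩ := exists_eisensteinNorm_eq hF h3 a
  obtain ⟨u, v, hB, hdet⟩ := exists_eisensteinPolar_eq_and_det_eq h2 (hxy ▸ ha) b d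
  refine ⟨x, y, u, v, hxy, ?_, hB⟩
  have h4 : (4 : F) ≠ 0 := by
    rw [show (4 : F) = 2 * 2 by norm_num]
    exact mul_ne_zero h2 h2
  have key := four_mul_eisensteinNorm_mul_sub_polar_sq x y u v
  rw [hxy, hB, hdet] at key
  rw [div_eq_iff h3] at hd
  refine mul_left_cancel₀ (mul_ne_zero h4 ha) ?_
  linear_combination key - hd

theorem exists_A4_system_iff_exists_eisenstein_gram (h3 : (3 : F) ≠ 0) :
    (∃ n m k l : F,
      -n ^ 2 + n * m - m ^ 2 - m = 1 ∧
      -k ^ 2 + k * l - l ^ 2 = 1 ∧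
      k * (m - 2 * n) + l * (n - 2 * m - 1) = -1) ↔
    ∃ x y u v : F,
      eisensteinNorm x y = -6 ∧ eisensteinNorm u v = -1 ∧ eisensteinPolar x y u v = 3 := by
  unfold eisensteinNorm eisensteinPolar
  constructor
  · rintro ⟨n, m, k, l, h₁, h₂, h₃⟩
    exact ⟨3 * n + 1, 3 * m + 2, k, l, by linear_combination -9 * h₁, by linear_combination -h₂,
      by linear_combination -3 * h₃⟩
  · rintro ⟨x, y, k, l, h₁, h₂, h₃⟩
    obtain ⟨n, rfl⟩ : ∃ n, x = 3 * n + 1 := ⟨(x - 1) / 3, by field_simp; ring⟩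
    obtain ⟨m, rfl⟩ : ∃ m, y = 3 * m + 2 := ⟨(y - 2) / 3, by field_simp; ring⟩
    refine ⟨n, m, k, l, mul_left_cancel₀ (mul_ne_zero h3 h3) ?_, by linear_combination -h₂,
      mul_left_cancel₀ h3 ?_⟩
    · linear_combination -h₁
    · linear_combination -h₃

end Field

/-- For a prime `p ≥ 5`, the compatibility system for realizing the Dynkin
diagram `A₄` over `(ℤ/p)²` has a solution in `ℤ/p` if and only if `5` is a
square modulo `p`. -/
theorem stmt_7 (p : ℕ) [Fact p.Prime] (hp : 5 ≤ p) :
    (∃ n m k l : ZMod p,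
      -n ^ 2 + n * m - m ^ 2 - m = 1 ∧
      -k ^ 2 + k * l - l ^ 2 = 1 ∧
      k * (m - 2 * n) + l * (n - 2 * m - 1) = -1) ↔
    IsSquare (5 : ZMod p) := by
  have hchar : ringChar (ZMod p) ≠ 2 := by rw [ZMod.ringChar_zmod_n]; omega
  have h2 : (2 : ZMod p) ≠ 0 := Ring.two_ne_zero hchar
  have h3 : (3 : ZMod p) ≠ 0 := by
    rw [Ne, show (3 : ZMod p) = (3 : ℕ) by norm_num, ZMod.natCast_eq_zero_iff]
    exact Nat.not_dvd_of_pos_of_lt (by norm_num) (by omega)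
  have hdisc : (4 * -6 * -1 - 3 ^ 2) / 3 = (5 : ZMod p) := by
    rw [div_eq_iff h3]
    norm_num
  rw [exists_A4_system_iff_exists_eisenstein_gram h3, ← hdisc]
  constructor
  · rintro ⟨x, y, u, v, hxy, huv, hB⟩
    exact isSquare_of_eisenstein_gram h3 hxy huv hB
  · have h6 : (-6 : ZMod p) ≠ 0 := by
      rw [show (-6 : ZMod p) = -(2 * 3) by norm_num]
      exact neg_ne_zero.mpr (mul_ne_zero h2 h3)
    exact exists_eisenstein_gram hchar h3 h6
end

section
/- If σ and τ are 2-cocycles for a Hopf algebra H, then the convolution product τ ⋆ σ⁻¹ is a 2-cocycle for the deformed Hopf algebra H_σ. -/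
open TensorProduct

universe u

variable (k H : Type u) [CommRing k] [Ring H] [HopfAlgebra k H]

/-- Convolution product of two linear functionals on the coalgebra `H ⊗ H`:
`(f ⋆ g)(x,y) = f(x₁,y₁) g(x₂,y₂)`. -/
noncomputable def conv (f g : H ⊗[k] H →ₗ[k] k) : H ⊗[k] H →ₗ[k] k :=
  LinearMap.mul' k k ∘ₗ TensorProduct.map f g
    ∘ₗ Coalgebra.comul (R := k) (A := H ⊗[k] H)

/-- The map `(x ⊗ y) ⊗ z ↦ σ(x₁,y₁) σ(x₂y₂, z)`, where products are taken
with respect to the multiplication `m`. -/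
noncomputable def cocycleLHS (m : H ⊗[k] H →ₗ[k] H) (σ : H ⊗[k] H →ₗ[k] k) :
    (H ⊗[k] H) ⊗[k] H →ₗ[k] k :=
  LinearMap.mul' k k
  ∘ₗ TensorProduct.map σ (σ ∘ₗ TensorProduct.map m LinearMap.id)
  ∘ₗ (TensorProduct.assoc k (H ⊗[k] H) (H ⊗[k] H) H).toLinearMap
  ∘ₗ TensorProduct.map (Coalgebra.comul (R := k) (A := H ⊗[k] H)) LinearMap.id

/-- The map `(x ⊗ y) ⊗ z ↦ σ(y₁,z₁) σ(x, y₂z₂)`, where products are taken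
with respect to the multiplication `m`. -/
noncomputable def cocycleRHS (m : H ⊗[k] H →ₗ[k] H) (σ : H ⊗[k] H →ₗ[k] k) :
    (H ⊗[k] H) ⊗[k] H →ₗ[k] k :=
  LinearMap.mul' k k
  ∘ₗ TensorProduct.map σ σ
  ∘ₗ (TensorProduct.leftComm k H (H ⊗[k] H) H).toLinearMap
  ∘ₗ TensorProduct.map LinearMap.id (TensorProduct.map LinearMap.id m)
  ∘ₗ TensorProduct.map LinearMap.id (Coalgebra.comul (R := k) (A := H ⊗[k] H))
  ∘ₗ (TensorProduct.assoc k H H H).toLinearMap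

/-- `σ` is a 2-cocycle with respect to the multiplication `m` (and the fixed
coalgebra structure of `H`): it satisfies the cocycle identity
`σ(x₁,y₁)σ(x₂y₂,z) = σ(y₁,z₁)σ(x,y₂z₂)`, the normalization `σ(1,1) = 1`, and
is convolution invertible. -/
noncomputable def IsTwoCocycle (m : H ⊗[k] H →ₗ[k] H)
    (σ : H ⊗[k] H →ₗ[k] k) : Prop :=
  cocycleLHS k H m σ = cocycleRHS k H m σ ∧
  σ ((1 : H) ⊗ₜ[k] (1 : H)) = 1 ∧
  ∃ σ' : H ⊗[k] H →ₗ[k] k,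
    conv k H σ σ' = Coalgebra.counit (R := k) (A := H ⊗[k] H) ∧
    conv k H σ' σ = Coalgebra.counit (R := k) (A := H ⊗[k] H)

/-- The deformed multiplication of `H_σ`:
`x ·_σ y = σ(x₁,y₁) x₂y₂ σ⁻¹(x₃,y₃)`, where `σ'` is the convolution inverse
of `σ`. -/
noncomputable def mulSigma (σ σ' : H ⊗[k] H →ₗ[k] k) : H ⊗[k] H →ₗ[k] H :=
  (TensorProduct.rid k H).toLinearMap
  ∘ₗ TensorProduct.map
      ((TensorProduct.lid k H).toLinearMap
        ∘ₗ TensorProduct.map σ (LinearMap.mul' k H))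
      σ'
  ∘ₗ TensorProduct.map (Coalgebra.comul (R := k) (A := H ⊗[k] H)) LinearMap.id
  ∘ₗ Coalgebra.comul (R := k) (A := H ⊗[k] H)

/-! ### Auxiliary general theory: convolution on the dual of a coalgebra -/

section GeneralConv
variable {C D : Type u}
  [AddCommGroup C] [Module k C] [Coalgebra k C]
  [AddCommGroup D] [Module k D] [Coalgebra k D]

/-- General convolution product on the dual of a coalgebra. -/
noncomputable def cv (f g : C →ₗ[k] k) : C →ₗ[k] k :=
  LinearMap.mul' k k ∘ₗ TensorProduct.map f g ∘ₗ Coalgebra.comul (R := k) (A := C)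

lemma cv_repr (f g : C →ₗ[k] k) {c : C} {ι : Type*} (r : Coalgebra.Repr k c ι) :
    cv k f g c = ∑ i ∈ r.index, f (r.left i) * g (r.right i) := by
  simp only [cv, LinearMap.comp_apply, ← r.eq, map_sum, TensorProduct.map_tmul,
    LinearMap.mul'_apply]

lemma cv_counit_left (f : C →ₗ[k] k) : cv k (Coalgebra.counit) f = f := by
  ext c
  have h := Coalgebra.sum_counit_tmul_map_eq (R := k) f c (repr := Coalgebra.Repr.arbitrary k c)
  have h2 := congrArg (LinearMap.mul' k k) h
  simp only [map_sum, LinearMap.mul'_apply, one_mul] at h2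
  rw [cv_repr k _ _ (Coalgebra.Repr.arbitrary k c), h2]

lemma cv_counit_right (f : C →ₗ[k] k) : cv k f (Coalgebra.counit) = f := by
  ext c
  have h := Coalgebra.sum_map_tmul_counit_eq (R := k) f c (repr := Coalgebra.Repr.arbitrary k c)
  have h2 := congrArg (LinearMap.mul' k k) h
  simp only [map_sum, LinearMap.mul'_apply, mul_one] at h2
  rw [cv_repr k _ _ (Coalgebra.Repr.arbitrary k c), h2]

lemma cv_assoc (f g h : C →ₗ[k] k) : cv k (cv k f g) h = cv k f (cv k g h) := by
  ext c
  set r := Coalgebra.Repr.arbitrary k c with hr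
  set r1 : (i : C × C) → Coalgebra.Repr k (r.left i) (C × C) :=
    fun i => Coalgebra.Repr.arbitrary k (r.left i) with hr1
  set r2 : (i : C × C) → Coalgebra.Repr k (r.right i) (C × C) :=
    fun i => Coalgebra.Repr.arbitrary k (r.right i) with hr2
  have key := Coalgebra.sum_map_tmul_tmul_eq (R := k) f g h c (repr := r) (a₁ := r1) (a₂ := r2)
  have h2 := congrArg (LinearMap.mul' k k ∘ₗ LinearMap.lTensor k (LinearMap.mul' k k)) key
  simp only [map_sum, LinearMap.comp_apply, LinearMap.lTensor_tmul, LinearMap.mul'_apply] at h2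
  rw [cv_repr k _ _ r, cv_repr k _ _ r]
  calc ∑ i ∈ r.index, cv k f g (r.left i) * h (r.right i)
      = ∑ i ∈ r.index, ∑ j ∈ (r1 i).index,
          f ((r1 i).left j) * (g ((r1 i).right j) * h (r.right i)) := by
        refine Finset.sum_congr rfl fun i _ => ?_
        rw [cv_repr k _ _ (r1 i), Finset.sum_mul]
        exact Finset.sum_congr rfl fun j _ => mul_assoc _ _ _
    _ = ∑ i ∈ r.index, ∑ j ∈ (r2 i).index,
          f (r.left i) * (g ((r2 i).left j) * h ((r2 i).right j)) := h2.symm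
    _ = ∑ i ∈ r.index, f (r.left i) * cv k g h (r.right i) := by
        refine Finset.sum_congr rfl fun i _ => ?_
        rw [cv_repr k _ _ (r2 i), Finset.mul_sum]

lemma cv_comp_coalgHom (φ : C →ₗc[k] D) (f g : D →ₗ[k] k) :
    cv k f g ∘ₗ (φ : C →ₗ[k] D) = cv k (f ∘ₗ (φ : C →ₗ[k] D)) (g ∘ₗ (φ : C →ₗ[k] D)) := by
  rw [cv, cv, LinearMap.comp_assoc, LinearMap.comp_assoc, ← CoalgHomClass.map_comp_comul φ,
    ← LinearMap.comp_assoc _ (TensorProduct.map (φ : C →ₗ[k] D) (φ : C →ₗ[k] D))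
      (TensorProduct.map f g),
    ← TensorProduct.map_comp]

lemma cv_inv_unique {a b b' : C →ₗ[k] k}
    (h1 : cv k a b = Coalgebra.counit) (h2 : cv k b' a = Coalgebra.counit) : b = b' := by
  calc b = cv k Coalgebra.counit b := (cv_counit_left k b).symm
    _ = cv k (cv k b' a) b := by rw [h2]
    _ = cv k b' (cv k a b) := cv_assoc k _ _ _
    _ = cv k b' Coalgebra.counit := by rw [h1]
    _ = b' := cv_counit_right k b'

lemma sum_counit_smul_map {M : Type u} [AddCommGroup M] [Module k M]
    (F : C →ₗ[k] M) {c : C} {ι : Type*} (r : Coalgebra.Repr k c ι) :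
    ∑ i ∈ r.index, Coalgebra.counit (R := k) (r.left i) • F (r.right i) = F c := by
  have h := congrArg ((TensorProduct.lid k M).toLinearMap ∘ₗ LinearMap.lTensor k F)
    (Coalgebra.sum_counit_tmul_eq (R := k) r)
  simp only [map_sum, LinearMap.comp_apply, LinearMap.lTensor_tmul, LinearEquiv.coe_coe,
    TensorProduct.lid_tmul, one_smul] at h
  exact h

lemma sum_smul_counit_map {M : Type u} [AddCommGroup M] [Module k M]
    (F : C →ₗ[k] M) {c : C} {ι : Type*} (r : Coalgebra.Repr k c ι) :
    ∑ i ∈ r.index, Coalgebra.counit (R := k) (r.right i) • F (r.left i) = F c := by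
  have h := congrArg ((TensorProduct.rid k M).toLinearMap ∘ₗ LinearMap.rTensor k F)
    (Coalgebra.sum_tmul_counit_eq (R := k) r)
  simp only [map_sum, LinearMap.comp_apply, LinearMap.rTensor_tmul, LinearEquiv.coe_coe,
    TensorProduct.rid_tmul, one_smul] at h
  exact h

lemma cv_tmul (f g : C ⊗[k] D →ₗ[k] k) {c : C} {d : D}
    {ι κ : Type*} (rc : Coalgebra.Repr k c ι) (rd : Coalgebra.Repr k d κ) :
    cv k f g (c ⊗ₜ[k] d) =
      ∑ i ∈ rc.index, ∑ j ∈ rd.index,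
        f (rc.left i ⊗ₜ[k] rd.left j) * g (rc.right i ⊗ₜ[k] rd.right j) := by
  have hcom : Coalgebra.comul (R := k) (c ⊗ₜ[k] d) =
      TensorProduct.tensorTensorTensorComm k C C D D
        (Coalgebra.comul (R := k) c ⊗ₜ[k] Coalgebra.comul (R := k) d) := by
    rfl
  rw [cv, LinearMap.comp_apply, LinearMap.comp_apply, hcom, ← rc.eq, ← rd.eq]
  simp only [TensorProduct.sum_tmul, TensorProduct.tmul_sum, map_sum,
    TensorProduct.tensorTensorTensorComm_tmul, TensorProduct.map_tmul, LinearMap.mul'_apply]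
  rw [Finset.sum_comm]

end GeneralConv

/-! ### Specialized coalgebra morphisms -/

section Morphisms

lemma conv_eq_cv (f g : H ⊗[k] H →ₗ[k] k) : conv k H f g = cv k f g := rfl

/-- Multiplication of the bialgebra `H` as a coalgebra morphism `H ⊗ H →ₗc H`. -/
noncomputable def mulCoalgHom : H ⊗[k] H →ₗc[k] H where
  toLinearMap := LinearMap.mul' k H
  counit_comp := by
    ext x y
    simp [mul_comm]
  map_comp_comul := by
    have aux1 : TensorProduct.map (LinearMap.mul' k H) (LinearMap.mul' k H) ∘ₗ
        (TensorProduct.tensorTensorTensorComm k H H H H).toLinearMap =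
        LinearMap.mul' k (H ⊗[k] H) := by
      ext a b c d
      simp [Algebra.TensorProduct.tmul_mul_tmul]
    ext x y
    have : Coalgebra.comul (R := k) (x ⊗ₜ[k] y) =
        TensorProduct.tensorTensorTensorComm k H H H H
          (Coalgebra.comul (R := k) x ⊗ₜ[k] Coalgebra.comul (R := k) y) := by
      rfl
    have h2 := LinearMap.congr_fun aux1
      (Coalgebra.comul (R := k) x ⊗ₜ[k] Coalgebra.comul (R := k) y)
    simp only [LinearMap.comp_apply, LinearEquiv.coe_coe, LinearEquiv.coe_toLinearMap] at h2
    simp only [LinearMap.comp_apply, TensorProduct.AlgebraTensorModule.curry_apply,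
      TensorProduct.curry_apply, LinearMap.coe_restrictScalars, this, h2,
      LinearMap.mul'_apply, Bialgebra.comul_mul]

@[simp] lemma mulCoalgHom_coe :
    (mulCoalgHom k H : H ⊗[k] H →ₗ[k] H) = LinearMap.mul' k H := rfl

/-- `(x ⊗ y) ⊗ z ↦ ε(z) • (x ⊗ y)` as a coalgebra morphism. -/
noncomputable def pA : (H ⊗[k] H) ⊗[k] H →ₗc[k] H ⊗[k] H :=
  (Coalgebra.TensorProduct.rid k k (H ⊗[k] H)).toCoalgHom.comp
    (Coalgebra.TensorProduct.map (CoalgHom.id k (H ⊗[k] H)) (Coalgebra.counitCoalgHom k H))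

/-- `(x ⊗ y) ⊗ z ↦ (xy) ⊗ z` as a coalgebra morphism. -/
noncomputable def pB : (H ⊗[k] H) ⊗[k] H →ₗc[k] H ⊗[k] H :=
  Coalgebra.TensorProduct.map (mulCoalgHom k H) (CoalgHom.id k H)

/-- `x ⊗ (y ⊗ z) ↦ ε(x) • (y ⊗ z)` as a coalgebra morphism. -/
noncomputable def pCq : H ⊗[k] (H ⊗[k] H) →ₗc[k] H ⊗[k] H :=
  (Coalgebra.TensorProduct.lid k (H ⊗[k] H)).toCoalgHom.comp
    (Coalgebra.TensorProduct.map (Coalgebra.counitCoalgHom k H) (CoalgHom.id k (H ⊗[k] H)))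

/-- `x ⊗ (y ⊗ z) ↦ x ⊗ (yz)` as a coalgebra morphism. -/
noncomputable def pDq : H ⊗[k] (H ⊗[k] H) →ₗc[k] H ⊗[k] H :=
  Coalgebra.TensorProduct.map (CoalgHom.id k H) (mulCoalgHom k H)

/-- The associator as a coalgebra morphism. -/
noncomputable def aso : (H ⊗[k] H) ⊗[k] H →ₗc[k] H ⊗[k] (H ⊗[k] H) :=
  (Coalgebra.TensorProduct.assoc k k H H H).toCoalgHom

noncomputable def pC : (H ⊗[k] H) ⊗[k] H →ₗc[k] H ⊗[k] H := (pCq k H).comp (aso k H)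

noncomputable def pD : (H ⊗[k] H) ⊗[k] H →ₗc[k] H ⊗[k] H := (pDq k H).comp (aso k H)

@[simp] lemma pA_apply (w : H ⊗[k] H) (z : H) :
    pA k H (w ⊗ₜ[k] z) = Coalgebra.counit (R := k) z • w := rfl

@[simp] lemma pB_coe :
    (pB k H : (H ⊗[k] H) ⊗[k] H →ₗ[k] H ⊗[k] H)
      = TensorProduct.map (LinearMap.mul' k H) LinearMap.id := rfl

@[simp] lemma pCq_apply (x : H) (v : H ⊗[k] H) :
    pCq k H (x ⊗ₜ[k] v) = Coalgebra.counit (R := k) x • v := rfl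

@[simp] lemma pDq_coe :
    (pDq k H : H ⊗[k] (H ⊗[k] H) →ₗ[k] H ⊗[k] H)
      = TensorProduct.map LinearMap.id (LinearMap.mul' k H) := rfl

@[simp] lemma pC_coe :
    (pC k H : (H ⊗[k] H) ⊗[k] H →ₗ[k] H ⊗[k] H)
      = (pCq k H : H ⊗[k] (H ⊗[k] H) →ₗ[k] H ⊗[k] H) ∘ₗ
        (TensorProduct.assoc k H H H).toLinearMap := rfl

@[simp] lemma pD_coe :
    (pD k H : (H ⊗[k] H) ⊗[k] H →ₗ[k] H ⊗[k] H)
      = TensorProduct.map LinearMap.id (LinearMap.mul' k H) ∘ₗ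
        (TensorProduct.assoc k H H H).toLinearMap := rfl

@[simp] lemma aso_coe :
    (aso k H : (H ⊗[k] H) ⊗[k] H →ₗ[k] H ⊗[k] (H ⊗[k] H))
      = (TensorProduct.assoc k H H H).toLinearMap := rfl

end Morphisms
/-! ### Expansion lemmas -/

section Expand

lemma cvA_left (f : H ⊗[k] H →ₗ[k] k) (g : (H ⊗[k] H) ⊗[k] H →ₗ[k] k)
    (w : H ⊗[k] H) (z : H) {ι : Type*} (r : Coalgebra.Repr k w ι) :
    cv k (f ∘ₗ (pA k H : _ →ₗ[k] _)) g (w ⊗ₜ[k] z)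
      = ∑ i ∈ r.index, f (r.left i) * g (r.right i ⊗ₜ[k] z) := by
  rw [cv_tmul k _ _ r (Coalgebra.Repr.arbitrary k z)]
  refine Finset.sum_congr rfl fun i _ => ?_
  set rz := Coalgebra.Repr.arbitrary k z with hrz
  calc ∑ p ∈ rz.index,
        (f ∘ₗ (pA k H : _ →ₗ[k] _)) (r.left i ⊗ₜ[k] rz.left p) * g (r.right i ⊗ₜ[k] rz.right p)
      = ∑ p ∈ rz.index, f (r.left i) *
          (Coalgebra.counit (R := k) (rz.left p) • g (r.right i ⊗ₜ[k] rz.right p)) := by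
        refine Finset.sum_congr rfl fun p _ => ?_
        simp only [LinearMap.comp_apply, CoalgHom.coe_toLinearMap, pA_apply, map_smul, smul_eq_mul]
        ring
    _ = f (r.left i) * g (r.right i ⊗ₜ[k] z) := by
        rw [← Finset.mul_sum]
        congr 1
        exact sum_counit_smul_map k (g ∘ₗ TensorProduct.mk k (H ⊗[k] H) H (r.right i)) rz

lemma cvA_right (f : (H ⊗[k] H) ⊗[k] H →ₗ[k] k) (g : H ⊗[k] H →ₗ[k] k)
    (w : H ⊗[k] H) (z : H) {ι : Type*} (r : Coalgebra.Repr k w ι) :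
    cv k f (g ∘ₗ (pA k H : _ →ₗ[k] _)) (w ⊗ₜ[k] z)
      = ∑ i ∈ r.index, f (r.left i ⊗ₜ[k] z) * g (r.right i) := by
  rw [cv_tmul k _ _ r (Coalgebra.Repr.arbitrary k z)]
  refine Finset.sum_congr rfl fun i _ => ?_
  set rz := Coalgebra.Repr.arbitrary k z with hrz
  calc ∑ p ∈ rz.index,
        f (r.left i ⊗ₜ[k] rz.left p) * (g ∘ₗ (pA k H : _ →ₗ[k] _)) (r.right i ⊗ₜ[k] rz.right p)
      = ∑ p ∈ rz.index,
          (Coalgebra.counit (R := k) (rz.right p) • f (r.left i ⊗ₜ[k] rz.left p)) *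
            g (r.right i) := by
        refine Finset.sum_congr rfl fun p _ => ?_
        simp only [LinearMap.comp_apply, CoalgHom.coe_toLinearMap, pA_apply, map_smul, smul_eq_mul]
        ring
    _ = f (r.left i ⊗ₜ[k] z) * g (r.right i) := by
        rw [← Finset.sum_mul]
        congr 1
        exact sum_smul_counit_map k (f ∘ₗ TensorProduct.mk k (H ⊗[k] H) H (r.left i)) rz

lemma cvq_left (f : H ⊗[k] H →ₗ[k] k) (g : H ⊗[k] (H ⊗[k] H) →ₗ[k] k)
    (x : H) (v : H ⊗[k] H) {ι : Type*} (r : Coalgebra.Repr k v ι) :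
    cv k (f ∘ₗ (pCq k H : _ →ₗ[k] _)) g (x ⊗ₜ[k] v)
      = ∑ i ∈ r.index, f (r.left i) * g (x ⊗ₜ[k] r.right i) := by
  rw [cv_tmul k _ _ (Coalgebra.Repr.arbitrary k x) r, Finset.sum_comm]
  refine Finset.sum_congr rfl fun i _ => ?_
  set rx := Coalgebra.Repr.arbitrary k x with hrx
  calc ∑ p ∈ rx.index,
        (f ∘ₗ (pCq k H : _ →ₗ[k] _)) (rx.left p ⊗ₜ[k] r.left i) * g (rx.right p ⊗ₜ[k] r.right i)
      = ∑ p ∈ rx.index, f (r.left i) *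
          (Coalgebra.counit (R := k) (rx.left p) • g (rx.right p ⊗ₜ[k] r.right i)) := by
        refine Finset.sum_congr rfl fun p _ => ?_
        simp only [LinearMap.comp_apply, CoalgHom.coe_toLinearMap, pCq_apply, map_smul, smul_eq_mul]
        ring
    _ = f (r.left i) * g (x ⊗ₜ[k] r.right i) := by
        rw [← Finset.mul_sum]
        congr 1
        exact sum_counit_smul_map k
          (g ∘ₗ (TensorProduct.mk k H (H ⊗[k] H)).flip (r.right i)) rx

lemma cvq_right (f : H ⊗[k] (H ⊗[k] H) →ₗ[k] k) (g : H ⊗[k] H →ₗ[k] k)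
    (x : H) (v : H ⊗[k] H) {ι : Type*} (r : Coalgebra.Repr k v ι) :
    cv k f (g ∘ₗ (pCq k H : _ →ₗ[k] _)) (x ⊗ₜ[k] v)
      = ∑ i ∈ r.index, f (x ⊗ₜ[k] r.left i) * g (r.right i) := by
  rw [cv_tmul k _ _ (Coalgebra.Repr.arbitrary k x) r, Finset.sum_comm]
  refine Finset.sum_congr rfl fun i _ => ?_
  set rx := Coalgebra.Repr.arbitrary k x with hrx
  calc ∑ p ∈ rx.index,
        f (rx.left p ⊗ₜ[k] r.left i) * (g ∘ₗ (pCq k H : _ →ₗ[k] _)) (rx.right p ⊗ₜ[k] r.right i)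
      = ∑ p ∈ rx.index,
          (Coalgebra.counit (R := k) (rx.right p) • f (rx.left p ⊗ₜ[k] r.left i)) *
            g (r.right i) := by
        refine Finset.sum_congr rfl fun p _ => ?_
        simp only [LinearMap.comp_apply, CoalgHom.coe_toLinearMap, pCq_apply, map_smul, smul_eq_mul]
        ring
    _ = f (x ⊗ₜ[k] r.left i) * g (r.right i) := by
        rw [← Finset.sum_mul]
        congr 1
        exact sum_smul_counit_map k
          (f ∘ₗ (TensorProduct.mk k H (H ⊗[k] H)).flip (r.left i)) rx

lemma cv3A (f h : H ⊗[k] H →ₗ[k] k) (g : (H ⊗[k] H) ⊗[k] H →ₗ[k] k)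
    (w : H ⊗[k] H) (z : H) {ι : Type*} (r : Coalgebra.Repr k w ι)
    {κ : Type*} (r2 : (i : ι) → Coalgebra.Repr k (r.right i) κ) :
    cv k (f ∘ₗ (pA k H : _ →ₗ[k] _)) (cv k g (h ∘ₗ (pA k H : _ →ₗ[k] _))) (w ⊗ₜ[k] z)
      = ∑ i ∈ r.index, f (r.left i) *
          ∑ j ∈ (r2 i).index, g ((r2 i).left j ⊗ₜ[k] z) * h ((r2 i).right j) := by
  rw [cvA_left k H _ _ _ _ r]
  exact Finset.sum_congr rfl fun i _ => by rw [cvA_right k H _ _ _ _ (r2 i)]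

lemma cv3q (f h : H ⊗[k] H →ₗ[k] k) (g : H ⊗[k] (H ⊗[k] H) →ₗ[k] k)
    (x : H) (v : H ⊗[k] H) {ι : Type*} (r : Coalgebra.Repr k v ι)
    {κ : Type*} (r2 : (i : ι) → Coalgebra.Repr k (r.right i) κ) :
    cv k (f ∘ₗ (pCq k H : _ →ₗ[k] _)) (cv k g (h ∘ₗ (pCq k H : _ →ₗ[k] _))) (x ⊗ₜ[k] v)
      = ∑ i ∈ r.index, f (r.left i) *
          ∑ j ∈ (r2 i).index, g (x ⊗ₜ[k] (r2 i).left j) * h ((r2 i).right j) := by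
  rw [cvq_left k H _ _ _ _ r]
  exact Finset.sum_congr rfl fun i _ => by rw [cvq_right k H _ _ _ _ (r2 i)]

end Expand
/-! ### Identification of the cocycle maps with convolutions -/

section Identify

lemma cocycleLHS_tmul (m : H ⊗[k] H →ₗ[k] H) (σ : H ⊗[k] H →ₗ[k] k)
    (w : H ⊗[k] H) (z : H) {ι : Type*} (r : Coalgebra.Repr k w ι) :
    cocycleLHS k H m σ (w ⊗ₜ[k] z)
      = ∑ i ∈ r.index, σ (r.left i) * σ (m (r.right i) ⊗ₜ[k] z) := by
  simp only [cocycleLHS, LinearMap.comp_apply, TensorProduct.map_tmul, LinearMap.id_coe,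
    id_eq, ← r.eq, TensorProduct.sum_tmul, map_sum, LinearEquiv.coe_coe,
    TensorProduct.assoc_tmul, LinearMap.mul'_apply]

lemma cocycleLHS_eq (m : H ⊗[k] H →ₗ[k] H) (f : H ⊗[k] H →ₗ[k] k) :
    cocycleLHS k H m f
      = cv k (f ∘ₗ (pA k H : _ →ₗ[k] _)) (f ∘ₗ TensorProduct.map m LinearMap.id) := by
  apply TensorProduct.ext'
  intro w z
  rw [cocycleLHS_tmul k H m f w z (Coalgebra.Repr.arbitrary k w),
    cvA_left k H _ _ _ _ (Coalgebra.Repr.arbitrary k w)]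
  simp

lemma cocycleRHS_apply (m : H ⊗[k] H →ₗ[k] H) (σ : H ⊗[k] H →ₗ[k] k)
    (x y z : H) {ι : Type*} (r : Coalgebra.Repr k (y ⊗ₜ[k] z) ι) :
    cocycleRHS k H m σ ((x ⊗ₜ[k] y) ⊗ₜ[k] z)
      = ∑ i ∈ r.index, σ (r.left i) * σ (x ⊗ₜ[k] m (r.right i)) := by
  simp only [cocycleRHS, LinearMap.comp_apply, LinearEquiv.coe_coe, TensorProduct.assoc_tmul,
    TensorProduct.map_tmul, LinearMap.id_coe, id_eq, ← r.eq, TensorProduct.tmul_sum, map_sum,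
    TensorProduct.leftComm_tmul, LinearMap.mul'_apply]

lemma cocycleRHS_eq (m : H ⊗[k] H →ₗ[k] H) (f : H ⊗[k] H →ₗ[k] k) :
    cocycleRHS k H m f
      = cv k (f ∘ₗ (pC k H : _ →ₗ[k] _))
          (f ∘ₗ (TensorProduct.map LinearMap.id m ∘ₗ
            (TensorProduct.assoc k H H H).toLinearMap)) := by
  have base : cocycleRHS k H m f
      = cv k (f ∘ₗ (pCq k H : _ →ₗ[k] _)) (f ∘ₗ TensorProduct.map LinearMap.id m)
          ∘ₗ (aso k H : _ →ₗ[k] _) := by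
    ext x y z
    simp only [LinearMap.comp_apply, TensorProduct.AlgebraTensorModule.curry_apply,
      TensorProduct.curry_apply, LinearMap.coe_restrictScalars, aso_coe, LinearEquiv.coe_coe,
      TensorProduct.assoc_tmul]
    rw [cocycleRHS_apply k H m f x y z (Coalgebra.Repr.arbitrary k (y ⊗ₜ[k] z)),
      cvq_left k H _ _ _ _ (Coalgebra.Repr.arbitrary k (y ⊗ₜ[k] z))]
    simp
  rw [base, cv_comp_coalgHom k (aso k H)]
  rw [LinearMap.comp_assoc, LinearMap.comp_assoc, aso_coe, pC_coe]

lemma mulSigma_repr (σ σ' : H ⊗[k] H →ₗ[k] k) (w : H ⊗[k] H)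
    {ι : Type*} (r : Coalgebra.Repr k w ι) {κ : Type*} (r1 : (i : ι) → Coalgebra.Repr k (r.left i) κ) :
    mulSigma k H σ σ' w
      = ∑ i ∈ r.index, ∑ j ∈ (r1 i).index,
          (σ ((r1 i).left j) * σ' (r.right i)) • LinearMap.mul' k H ((r1 i).right j) := by
  rw [mulSigma]
  simp only [LinearMap.comp_apply]
  rw [← r.eq]
  simp only [map_sum, TensorProduct.map_tmul, LinearMap.id_coe, id_eq]
  refine Finset.sum_congr rfl fun i _ => ?_
  rw [← (r1 i).eq]
  simp only [TensorProduct.sum_tmul, map_sum, TensorProduct.map_tmul, LinearMap.comp_apply,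
    LinearEquiv.coe_coe, TensorProduct.lid_tmul, TensorProduct.rid_tmul,
    TensorProduct.smul_tmul', map_smul]
  refine Finset.sum_congr rfl fun j _ => ?_
  rw [smul_smul, mul_comm]

end Identify
/-! ### The deformation identities -/

section KeyIdentities

lemma key_B (σ σ' f : H ⊗[k] H →ₗ[k] k) :
    f ∘ₗ TensorProduct.map (mulSigma k H σ σ') LinearMap.id
      = cv k (σ ∘ₗ (pA k H : _ →ₗ[k] _))
          (cv k (f ∘ₗ (pB k H : _ →ₗ[k] _)) (σ' ∘ₗ (pA k H : _ →ₗ[k] _))) := by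
  apply TensorProduct.ext'
  intro w z
  set r := Coalgebra.Repr.arbitrary k w with hr
  set r1 : (i : (H ⊗[k] H) × (H ⊗[k] H)) → Coalgebra.Repr k (r.left i) ((H ⊗[k] H) × (H ⊗[k] H)) :=
    fun i => Coalgebra.Repr.arbitrary k (r.left i) with hr1
  set r2 : (i : (H ⊗[k] H) × (H ⊗[k] H)) → Coalgebra.Repr k (r.right i) ((H ⊗[k] H) × (H ⊗[k] H)) :=
    fun i => Coalgebra.Repr.arbitrary k (r.right i) with hr2
  set G : H ⊗[k] H →ₗ[k] k :=
    f ∘ₗ (TensorProduct.mk k H H).flip z ∘ₗ LinearMap.mul' k H with hG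
  have hGval : ∀ u : H ⊗[k] H, G u = f (LinearMap.mul' k H u ⊗ₜ[k] z) := fun u => rfl
  have key := Coalgebra.sum_map_tmul_tmul_eq (R := k) σ G σ' w
    (repr := r) (a₁ := r1) (a₂ := r2)
  have key2 := congrArg (LinearMap.mul' k k ∘ₗ LinearMap.lTensor k (LinearMap.mul' k k)) key
  simp only [map_sum, LinearMap.comp_apply, LinearMap.lTensor_tmul, LinearMap.mul'_apply] at key2
  calc (f ∘ₗ TensorProduct.map (mulSigma k H σ σ') LinearMap.id) (w ⊗ₜ[k] z)
      = f (mulSigma k H σ σ' w ⊗ₜ[k] z) := rfl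
    _ = ∑ i ∈ r.index, ∑ j ∈ (r1 i).index,
          σ ((r1 i).left j) * (G ((r1 i).right j) * σ' (r.right i)) := by
        rw [mulSigma_repr k H σ σ' w r r1]
        simp only [TensorProduct.sum_tmul, ← TensorProduct.smul_tmul', map_sum, map_smul,
          smul_eq_mul, hGval]
        refine Finset.sum_congr rfl fun i _ => Finset.sum_congr rfl fun j _ => by ring
    _ = ∑ i ∈ r.index, ∑ j ∈ (r2 i).index,
          σ (r.left i) * (G ((r2 i).left j) * σ' ((r2 i).right j)) := key2.symm
    _ = cv k (σ ∘ₗ (pA k H : _ →ₗ[k] _))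
          (cv k (f ∘ₗ (pB k H : _ →ₗ[k] _)) (σ' ∘ₗ (pA k H : _ →ₗ[k] _))) (w ⊗ₜ[k] z) := by
        rw [cv3A k H σ σ' (f ∘ₗ (pB k H : _ →ₗ[k] _)) w z r r2]
        refine (Finset.sum_congr rfl fun i _ => ?_).symm
        rw [Finset.mul_sum]
        refine Finset.sum_congr rfl fun j _ => ?_
        simp only [LinearMap.comp_apply, pB_coe, TensorProduct.map_tmul, LinearMap.id_coe,
          id_eq, hGval]

lemma key_D (σ σ' f : H ⊗[k] H →ₗ[k] k) :
    f ∘ₗ TensorProduct.map LinearMap.id (mulSigma k H σ σ')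
      = cv k (σ ∘ₗ (pCq k H : _ →ₗ[k] _))
          (cv k (f ∘ₗ (pDq k H : _ →ₗ[k] _)) (σ' ∘ₗ (pCq k H : _ →ₗ[k] _))) := by
  apply TensorProduct.ext'
  intro x v
  set r := Coalgebra.Repr.arbitrary k v with hr
  set r1 : (i : (H ⊗[k] H) × (H ⊗[k] H)) → Coalgebra.Repr k (r.left i) ((H ⊗[k] H) × (H ⊗[k] H)) :=
    fun i => Coalgebra.Repr.arbitrary k (r.left i) with hr1
  set r2 : (i : (H ⊗[k] H) × (H ⊗[k] H)) → Coalgebra.Repr k (r.right i) ((H ⊗[k] H) × (H ⊗[k] H)) :=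
    fun i => Coalgebra.Repr.arbitrary k (r.right i) with hr2
  set G : H ⊗[k] H →ₗ[k] k :=
    f ∘ₗ TensorProduct.mk k H H x ∘ₗ LinearMap.mul' k H with hG
  have hGval : ∀ u : H ⊗[k] H, G u = f (x ⊗ₜ[k] LinearMap.mul' k H u) := fun u => rfl
  have key := Coalgebra.sum_map_tmul_tmul_eq (R := k) σ G σ' v
    (repr := r) (a₁ := r1) (a₂ := r2)
  have key2 := congrArg (LinearMap.mul' k k ∘ₗ LinearMap.lTensor k (LinearMap.mul' k k)) key
  simp only [map_sum, LinearMap.comp_apply, LinearMap.lTensor_tmul, LinearMap.mul'_apply] at key2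
  calc (f ∘ₗ TensorProduct.map LinearMap.id (mulSigma k H σ σ')) (x ⊗ₜ[k] v)
      = f (x ⊗ₜ[k] mulSigma k H σ σ' v) := rfl
    _ = ∑ i ∈ r.index, ∑ j ∈ (r1 i).index,
          σ ((r1 i).left j) * (G ((r1 i).right j) * σ' (r.right i)) := by
        rw [mulSigma_repr k H σ σ' v r r1]
        simp only [TensorProduct.tmul_sum, TensorProduct.tmul_smul, map_sum, map_smul,
          smul_eq_mul, hGval]
        refine Finset.sum_congr rfl fun i _ => Finset.sum_congr rfl fun j _ => by ring
    _ = ∑ i ∈ r.index, ∑ j ∈ (r2 i).index,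
          σ (r.left i) * (G ((r2 i).left j) * σ' ((r2 i).right j)) := key2.symm
    _ = cv k (σ ∘ₗ (pCq k H : _ →ₗ[k] _))
          (cv k (f ∘ₗ (pDq k H : _ →ₗ[k] _)) (σ' ∘ₗ (pCq k H : _ →ₗ[k] _))) (x ⊗ₜ[k] v) := by
        rw [cv3q k H σ σ' (f ∘ₗ (pDq k H : _ →ₗ[k] _)) x v r r2]
        refine (Finset.sum_congr rfl fun i _ => ?_).symm
        rw [Finset.mul_sum]
        refine Finset.sum_congr rfl fun j _ => ?_
        simp only [LinearMap.comp_apply, pDq_coe, TensorProduct.map_tmul, LinearMap.id_coe,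
          id_eq, hGval]

lemma key_D' (σ σ' f : H ⊗[k] H →ₗ[k] k) :
    f ∘ₗ (TensorProduct.map LinearMap.id (mulSigma k H σ σ') ∘ₗ
        (TensorProduct.assoc k H H H).toLinearMap)
      = cv k (σ ∘ₗ (pC k H : _ →ₗ[k] _))
          (cv k (f ∘ₗ (pD k H : _ →ₗ[k] _)) (σ' ∘ₗ (pC k H : _ →ₗ[k] _))) := by
  have h : (f ∘ₗ TensorProduct.map LinearMap.id (mulSigma k H σ σ')) ∘ₗ
        (aso k H : (H ⊗[k] H) ⊗[k] H →ₗ[k] H ⊗[k] (H ⊗[k] H))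
      = (cv k (σ ∘ₗ (pCq k H : _ →ₗ[k] _))
          (cv k (f ∘ₗ (pDq k H : _ →ₗ[k] _)) (σ' ∘ₗ (pCq k H : _ →ₗ[k] _)))) ∘ₗ
        (aso k H : (H ⊗[k] H) ⊗[k] H →ₗ[k] H ⊗[k] (H ⊗[k] H)) := by
    rw [key_D k H σ σ' f]
  rw [cv_comp_coalgHom k (aso k H), cv_comp_coalgHom k (aso k H), aso_coe] at h
  rw [← LinearMap.comp_assoc, h]
  simp only [pC_coe, pD_coe, pDq_coe, LinearMap.comp_assoc]

end KeyIdentities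
/-! ### Abstract convolution computation -/

section Abstract
variable {C3 : Type u} [AddCommGroup C3] [Module k C3] [Coalgebra k C3]

lemma cv_main (aσ aσ' aτ bσ bσ' bτ cσ cσ' cτ dσ dσ' dτ : C3 →ₗ[k] k)
    (hab : cv k aσ bσ = cv k cσ dσ)
    (hτab : cv k aτ bτ = cv k cτ dτ)
    (ha : cv k aσ aσ' = Coalgebra.counit) (ha' : cv k aσ' aσ = Coalgebra.counit)
    (hb : cv k bσ bσ' = Coalgebra.counit)
    (hc' : cv k cσ' cσ = Coalgebra.counit)
    (hd' : cv k dσ' dσ = Coalgebra.counit) :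
    cv k (cv k aτ aσ') (cv k aσ (cv k (cv k bτ bσ') aσ'))
      = cv k (cv k cτ cσ') (cv k cσ (cv k (cv k dτ dσ') cσ')) := by
  have E_eq : cv k bσ' aσ' = cv k dσ' cσ' := by
    refine cv_inv_unique k (a := cv k aσ bσ) ?_ ?_
    · rw [cv_assoc, ← cv_assoc k bσ bσ' aσ', hb, cv_counit_left, ha]
    · rw [hab, cv_assoc, ← cv_assoc k cσ' cσ dσ, hc', cv_counit_left, hd']
  calc cv k (cv k aτ aσ') (cv k aσ (cv k (cv k bτ bσ') aσ'))
      = cv k aτ (cv k aσ' (cv k aσ (cv k bτ (cv k bσ' aσ')))) := by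
        rw [cv_assoc k aτ aσ', cv_assoc k bτ bσ']
    _ = cv k aτ (cv k (cv k aσ' aσ) (cv k bτ (cv k bσ' aσ'))) := by
        rw [← cv_assoc k aσ' aσ]
    _ = cv k (cv k aτ bτ) (cv k bσ' aσ') := by
        rw [ha', cv_counit_left, ← cv_assoc k aτ bτ]
    _ = cv k (cv k cτ dτ) (cv k dσ' cσ') := by rw [hτab, E_eq]
    _ = cv k cτ (cv k (cv k cσ' cσ) (cv k dτ (cv k dσ' cσ'))) := by
        rw [hc', cv_counit_left, ← cv_assoc k cτ dτ]
    _ = cv k cτ (cv k cσ' (cv k cσ (cv k dτ (cv k dσ' cσ')))) := by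
        rw [← cv_assoc k cσ' cσ]
    _ = cv k (cv k cτ cσ') (cv k cσ (cv k (cv k dτ dσ') cσ')) := by
        rw [cv_assoc k cτ cσ', cv_assoc k dτ dσ']

end Abstract

/-! ### Remaining small computations -/

section Small

lemma one_tmul_one : ((1 : H) ⊗ₜ[k] (1 : H)) = (1 : H ⊗[k] H) :=
  Algebra.TensorProduct.one_def.symm

lemma cv_one (f g : H ⊗[k] H →ₗ[k] k) :
    cv k f g ((1 : H) ⊗ₜ[k] (1 : H)) = f ((1 : H) ⊗ₜ[k] (1 : H)) * g ((1 : H) ⊗ₜ[k] (1 : H)) := by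
  rw [one_tmul_one, cv, LinearMap.comp_apply, LinearMap.comp_apply, Bialgebra.comul_one,
    show (1 : (H ⊗[k] H) ⊗[k] (H ⊗[k] H)) = (1 : H ⊗[k] H) ⊗ₜ[k] (1 : H ⊗[k] H) from
      Algebra.TensorProduct.one_def,
    TensorProduct.map_tmul, LinearMap.mul'_apply]

lemma counit2_one :
    Coalgebra.counit (R := k) ((1 : H) ⊗ₜ[k] (1 : H)) = 1 := by
  rw [one_tmul_one, Bialgebra.counit_one]

end Small
/-- If `σ` and `τ` are 2-cocycles for a Hopf algebra `H`, then the convolution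
product `τ ⋆ σ⁻¹` is a 2-cocycle for the deformed Hopf algebra `H_σ` (same
coalgebra, multiplication `·_σ`). -/
theorem stmt_10 (σ τ σ' : H ⊗[k] H →ₗ[k] k)
    (hσ : IsTwoCocycle k H (LinearMap.mul' k H) σ)
    (hτ : IsTwoCocycle k H (LinearMap.mul' k H) τ)
    (hσ'₁ : conv k H σ σ' = Coalgebra.counit (R := k) (A := H ⊗[k] H))
    (hσ'₂ : conv k H σ' σ = Coalgebra.counit (R := k) (A := H ⊗[k] H)) :
    IsTwoCocycle k H (mulSigma k H σ σ') (conv k H τ σ') := by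
  obtain ⟨hcσ, hnσ, -⟩ := hσ
  obtain ⟨hcτ, hnτ, τ', hτ1, hτ2⟩ := hτ
  rw [conv_eq_cv] at hσ'₁ hσ'₂ hτ1 hτ2
  have hσ'11 : σ' ((1 : H) ⊗ₜ[k] (1 : H)) = 1 := by
    have h := LinearMap.congr_fun hσ'₂ ((1 : H) ⊗ₜ[k] (1 : H))
    rwa [cv_one, hnσ, mul_one, counit2_one] at h
  -- pullbacks of the `σ`-inverse relations
  have hIA₁ : cv k (σ ∘ₗ (pA k H : _ →ₗ[k] _)) (σ' ∘ₗ (pA k H : _ →ₗ[k] _))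
      = Coalgebra.counit (R := k) (A := (H ⊗[k] H) ⊗[k] H) := by
    rw [← cv_comp_coalgHom, hσ'₁, CoalgHomClass.counit_comp]
  have hIA₂ : cv k (σ' ∘ₗ (pA k H : _ →ₗ[k] _)) (σ ∘ₗ (pA k H : _ →ₗ[k] _))
      = Coalgebra.counit (R := k) (A := (H ⊗[k] H) ⊗[k] H) := by
    rw [← cv_comp_coalgHom, hσ'₂, CoalgHomClass.counit_comp]
  have hIB₁ : cv k (σ ∘ₗ (pB k H : _ →ₗ[k] _)) (σ' ∘ₗ (pB k H : _ →ₗ[k] _))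
      = Coalgebra.counit (R := k) (A := (H ⊗[k] H) ⊗[k] H) := by
    rw [← cv_comp_coalgHom, hσ'₁, CoalgHomClass.counit_comp]
  have hIC₂ : cv k (σ' ∘ₗ (pC k H : _ →ₗ[k] _)) (σ ∘ₗ (pC k H : _ →ₗ[k] _))
      = Coalgebra.counit (R := k) (A := (H ⊗[k] H) ⊗[k] H) := by
    rw [← cv_comp_coalgHom, hσ'₂, CoalgHomClass.counit_comp]
  have hID₂ : cv k (σ' ∘ₗ (pD k H : _ →ₗ[k] _)) (σ ∘ₗ (pD k H : _ →ₗ[k] _))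
      = Coalgebra.counit (R := k) (A := (H ⊗[k] H) ⊗[k] H) := by
    rw [← cv_comp_coalgHom, hσ'₂, CoalgHomClass.counit_comp]
  -- pullbacks of the cocycle identities
  rw [cocycleLHS_eq, cocycleRHS_eq, ← pB_coe, ← pD_coe] at hcσ hcτ
  refine ⟨?_, ?_, ?_⟩
  · -- the cocycle identity for the deformed multiplication
    rw [conv_eq_cv, cocycleLHS_eq, cocycleRHS_eq, key_B, key_D',
      cv_comp_coalgHom k (pA k H) τ σ', cv_comp_coalgHom k (pB k H) τ σ',
      cv_comp_coalgHom k (pC k H) τ σ', cv_comp_coalgHom k (pD k H) τ σ']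
    exact cv_main k _ _ _ _ _ _ _ _ _ _ _ _ hcσ hcτ hIA₁ hIA₂ hIB₁ hIC₂ hID₂
  · -- normalization
    rw [conv_eq_cv, cv_one, hnτ, hσ'11, mul_one]
  · -- convolution invertibility
    refine ⟨cv k σ τ', ?_, ?_⟩
    · rw [conv_eq_cv, conv_eq_cv, cv_assoc, ← cv_assoc k σ' σ, hσ'₂, cv_counit_left, hτ1]
    · rw [conv_eq_cv, conv_eq_cv, cv_assoc, ← cv_assoc k τ' τ, hτ2, cv_counit_left, hσ'₁]
end
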